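/- Let k ≥ 1 and for i = 1,…,k let A_i ∈ ℂ^{n×p_i} with A_i ≠ 0, B_i ∈ ℂ^{m_i×q_i}, C_i ∈ ℂ^{n×q_i} and Hermitian M_i ∈ ℂ^{q_i×q_i}; let D ∈ ℂ^{n×n} be Hermitian. Define ψ(X₁,…,X_k) = Σ_{i=1}^k (A_iX_iB_i + C_i)M_i(A_iX_iB_i + C_i)* + D for X_i ∈ ℂ^{p_i×m_i}. Then there exist X̂₁,…,X̂_k such that ψ(X₁,…,X_k) ⪰ ψ(X̂₁,…,X̂_k) for all X₁,…,X_k if and only if for every i = 1,…,k: B_iM_iB_i* ⪰ 0, ℛ(B_iM_iC_i*) ⊆ ℛ(B_iM_iB_i*), and ℛ(C_iM_iB_i*) ⊆ ℛ(A_i). Moreover, under these conditions, (X̂₁,…,X̂_k) is such a global minimizer if and only if A_iX̂_iB_iM_iB_i* = −C_iM_iB_i* for every i = 1,…,k. -/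

import Mathlib

/-!
Write `N = B M Bᴴ` and `K = (A X̂ B + C) M Bᴴ = A X̂ N + C M Bᴴ`. Since `ψ` is a sum of
independent blocks plus a constant, `X̂` is a global minimizer iff each `X̂ᵢ` minimizes its block,
and for one block
`ψ(X̂ + Z) - ψ(X̂) = (A Z) Kᴴ + K (A Z)ᴴ + (A Z) N (A Z)ᴴ`.
Replacing `Z` by `t Z` for real `t`, this is `⪰ 0` for all `Z` iff the part linear in `Z` vanishes
and the quadratic part is `⪰ 0`; as `A ≠ 0`, rank-one choices of `Z` turn this into `K = 0` and
`N ⪰ 0`. Finally `A X N = -C M Bᴴ` is solvable iff `C M Bᴴ` has its columns in `ℛ(A)` and its rows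
in the row space of `N`: a solution is built from an inner inverse `P` of `N` (`N P N = N`).
-/

open Matrix
open scoped ComplexOrder

namespace Matrix

theorem exists_mul_mul_eq_self {K m n : Type*} [Field K] [Fintype m] [Fintype n]
    (N : Matrix m n K) : ∃ P : Matrix n m K, N * P * N = N := by
  classical
  set f := N.mulVecLin
  obtain ⟨g, hg⟩ := f.rangeRestrict.exists_rightInverse_of_surjective f.range_rangeRestrict
  obtain ⟨π, hπ⟩ := f.range.subtype.exists_leftInverse_of_injective f.range.ker_subtype
  refine ⟨LinearMap.toMatrix' (g ∘ₗ π), toLin'.injective <| LinearMap.ext fun x => ?_⟩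
  have hgπ : f (g (π (f x))) = f x := by
    have hπf : π (f x) = f.rangeRestrict x := by
      simpa using LinearMap.congr_fun hπ (f.rangeRestrict x)
    rw [hπf]
    exact congrArg Subtype.val (LinearMap.congr_fun hg (f.rangeRestrict x))
  simpa [toLin'_mul, f] using hgπ

theorem exists_mul_mul_eq_iff {K l m n o : Type*} [Field K] [Fintype m] [Fintype n] [Fintype o]
    (A : Matrix l m K) (N : Matrix n o K) (E : Matrix l o K) :
    (∃ X : Matrix m n K, A * X * N = E) ↔
      (∃ Y : Matrix m o K, E = A * Y) ∧ ∃ V : Matrix l n K, E = V * N := by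
  constructor
  · rintro ⟨X, rfl⟩
    exact ⟨⟨X * N, Matrix.mul_assoc _ _ _⟩, ⟨A * X, rfl⟩⟩
  · rintro ⟨⟨Y, hY⟩, ⟨V, hV⟩⟩
    obtain ⟨P, hP⟩ := N.exists_mul_mul_eq_self
    refine ⟨Y * P, ?_⟩
    rw [← Matrix.mul_assoc, ← hY, hV, Matrix.mul_assoc V, Matrix.mul_assoc V, hP]

theorem range_mulVecLin_le_iff {R l m o : Type*} [CommSemiring R] [Fintype m] [Fintype o]
    (E : Matrix l o R) (A : Matrix l m R) :
    LinearMap.range E.mulVecLin ≤ LinearMap.range A.mulVecLin ↔ ∃ Y : Matrix m o R, E = A * Y := by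
  rw [range_mulVecLin, Submodule.span_le, Set.range_subset_iff]
  constructor
  · intro h
    choose y hy using h
    refine ⟨(of y)ᵀ, ext fun i j => ?_⟩
    simpa [mul_apply, mulVec, dotProduct] using (congrFun (hy j) i).symm
  · rintro ⟨Y, rfl⟩ j
    exact ⟨Y.col j, funext fun i => by simp [mul_apply, mulVec, dotProduct]⟩

theorem eq_zero_of_forall_mul_mul_eq_zero {R l m n o : Type*} [Semiring R] [NoZeroDivisors R]
    [Fintype l] [Fintype m] [Fintype n] {A : Matrix n l R} {K : Matrix m o R} (hA : A ≠ 0)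
    (h : ∀ Z : Matrix l m R, A * Z * K = 0) : K = 0 := by
  classical
  obtain ⟨a, r, har⟩ : ∃ a r, A a r ≠ 0 := by
    by_contra! h0
    exact hA (ext h0)
  ext c d
  have hcd : (single a a (1 : R) * (A * single r c (1 : R) * K)) a d = 0 := by
    rw [h, Matrix.mul_zero, zero_apply]
  rw [← Matrix.mul_assoc, ← Matrix.mul_assoc, single_mul_mul_single, single_mul_apply_same,
    one_mul, mul_one] at hcd
  exact (mul_eq_zero.mp hcd).resolve_left har

theorem eq_zero_of_forall_posSemidef_smul_add_sq_smul {n : Type*} [Fintype n]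
    {L P : Matrix n n ℂ} (hL : L.IsHermitian)
    (h : ∀ t : ℝ, ((t : ℂ) • L + (t : ℂ) ^ 2 • P).PosSemidef) : L = 0 := by
  have hform : ∀ x, star x ⬝ᵥ L *ᵥ x = 0 := by
    intro x
    set l := star x ⬝ᵥ L *ᵥ x
    set q := star x ⬝ᵥ P *ᵥ x
    -- a real quadratic in `t` without constant term that is `≥ 0` everywhere has no linear term
    have hquad : ∀ t : ℝ, 0 ≤ q.re * (t * t) + l.re * t + 0 := fun t => by
      have := (Complex.nonneg_iff.mp ((h t).dotProduct_mulVec_nonneg x)).1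
      simp only [add_mulVec, smul_mulVec, dotProduct_add, dotProduct_smul, smul_eq_mul,
        Complex.add_re, Complex.re_ofReal_mul, ← Complex.ofReal_pow] at this
      linarith
    have hre : l.re = 0 := by
      have := discrim_le_zero hquad
      rw [discrim] at this
      nlinarith
    exact Complex.ext hre (hL.im_star_dotProduct_mulVec_self x)
  have hpsd : L.PosSemidef := .of_dotProduct_mulVec_nonneg hL fun x => (hform x).ge
  classical
  ext i j
  simpa using congrFun ((hpsd.dotProduct_mulVec_zero_iff _).mp (hform (Pi.single j 1))) i

theorem posSemidef_of_forall_posSemidef_mul_mul_conjTranspose {n p m : Type*} [Fintype p]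
    [Fintype m] {A : Matrix n p ℂ} {N : Matrix m m ℂ} (hA : A ≠ 0) (hN : N.IsHermitian)
    (h : ∀ Z : Matrix p m ℂ, (A * Z * N * (A * Z)ᴴ).PosSemidef) : N.PosSemidef := by
  classical
  obtain ⟨u, hu⟩ : ∃ u, A *ᵥ u ≠ 0 := by
    by_contra! h0
    exact hA (ext fun i j => by simpa using congrFun (h0 (Pi.single j 1)) i)
  obtain ⟨i, hi⟩ := Function.ne_iff.mp hu
  refine .of_dotProduct_mulVec_nonneg hN fun w => ?_
  have hdiag := (h (vecMulVec u (star w))).diag_nonneg (i := i)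
  rw [mul_vecMulVec, vecMulVec_mul, conjTranspose_vecMulVec, vecMulVec_mul_vecMulVec,
    star_star] at hdiag
  simp only [vecMulVec_apply, Pi.smul_apply, smul_eq_mul, Pi.star_apply,
    ← dotProduct_mulVec] at hdiag
  set c := (A *ᵥ u) i
  have hc : (0 : ℝ) < Complex.normSq c := Complex.normSq_pos.mpr hi
  rw [Complex.star_def, mul_left_comm, Complex.mul_conj, mul_comm] at hdiag
  have := mul_nonneg (Complex.zero_le_real.mpr (inv_nonneg.mpr hc.le)) hdiag
  rwa [← mul_assoc, ← Complex.ofReal_mul, inv_mul_cancel₀ hc.ne', Complex.ofReal_one,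
    one_mul] at this

theorem posSemidef_sum_sub_iff {R : Type*} [Ring R] [PartialOrder R] [StarRing R]
    [AddLeftMono R] {ι n : Type*} [Fintype ι] {X : ι → Type*}
    (f : ∀ i, X i → Matrix n n R) (x₀ : ∀ i, X i) :
    (∀ x : ∀ i, X i, (∑ i, f i (x i) - ∑ i, f i (x₀ i)).PosSemidef) ↔
      ∀ i y, (f i y - f i (x₀ i)).PosSemidef := by
  classical
  simp_rw [← Finset.sum_sub_distrib]
  refine ⟨fun h i y => ?_, fun h x => posSemidef_sum _ fun i _ => h i (x i)⟩
  convert h (Function.update x₀ i y) using 1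
  rw [Finset.sum_eq_single i (fun j _ hj => by rw [Function.update_of_ne hj, sub_self])
    (fun hi => absurd (Finset.mem_univ i) hi), Function.update_self]

end Matrix

section QuadraticMatrixFunction

variable {n p m q : Type*} [Fintype p] [Fintype m] [Fintype q]
  {A : Matrix n p ℂ} {B : Matrix m q ℂ} {C : Matrix n q ℂ} {M : Matrix q q ℂ}

theorem quadratic_add_sub_quadratic (hM : M.IsHermitian) (X Z : Matrix p m ℂ) :
    (A * (X + Z) * B + C) * M * (A * (X + Z) * B + C)ᴴ - (A * X * B + C) * M * (A * X * B + C)ᴴ =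
      A * Z * (A * X * (B * M * Bᴴ) + C * M * Bᴴ)ᴴ +
        (A * X * (B * M * Bᴴ) + C * M * Bᴴ) * (A * Z)ᴴ + A * Z * (B * M * Bᴴ) * (A * Z)ᴴ := by
  simp only [Matrix.mul_add, Matrix.add_mul, conjTranspose_add, conjTranspose_mul,
    conjTranspose_conjTranspose, hM.eq, Matrix.mul_assoc]
  abel

variable [Fintype n]

theorem eq_zero_and_posSemidef_of_forall_posSemidef {K : Matrix n m ℂ} {N : Matrix m m ℂ}
    (hA : A ≠ 0) (hN : N.IsHermitian)
    (h : ∀ Z : Matrix p m ℂ, (A * Z * Kᴴ + K * (A * Z)ᴴ + A * Z * N * (A * Z)ᴴ).PosSemidef) :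
    K = 0 ∧ N.PosSemidef := by
  have hlin : ∀ Z : Matrix p m ℂ, A * Z * Kᴴ + K * (A * Z)ᴴ = 0 := by
    intro Z
    refine eq_zero_of_forall_posSemidef_smul_add_sq_smul (P := A * Z * N * (A * Z)ᴴ) ?_
      fun t => ?_
    · simp only [IsHermitian, conjTranspose_add, conjTranspose_mul, conjTranspose_conjTranspose,
        Matrix.mul_assoc, add_comm]
    · convert h ((t : ℂ) • Z) using 1
      simp only [Matrix.mul_smul, Matrix.smul_mul, conjTranspose_smul, Complex.star_def,
        Complex.conj_ofReal]
      module
  have hK : K = 0 := by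
    refine conjTranspose_eq_zero.mp (eq_zero_of_forall_mul_mul_eq_zero hA fun Z => ?_)
    have hZ := hlin Z
    have hIZ := hlin (Complex.I • Z)
    simp only [Matrix.mul_smul, Matrix.smul_mul, conjTranspose_smul, Complex.star_def,
      Complex.conj_I] at hIZ
    linear_combination (norm := match_scalars <;> ring_nf <;> simp only [Complex.I_sq] <;> ring)
      (1 / 2 : ℂ) • hZ - (Complex.I / 2) • hIZ
  refine ⟨hK, posSemidef_of_forall_posSemidef_mul_mul_conjTranspose hA hN fun Z => ?_⟩
  simpa [hK] using h Z

theorem quadratic_isMin_iff (hM : M.IsHermitian) (hA : A ≠ 0) (X₀ : Matrix p m ℂ) :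
    (∀ X : Matrix p m ℂ, ((A * X * B + C) * M * (A * X * B + C)ᴴ -
        (A * X₀ * B + C) * M * (A * X₀ * B + C)ᴴ).PosSemidef) ↔
      (B * M * Bᴴ).PosSemidef ∧ A * X₀ * (B * M * Bᴴ) = -(C * M * Bᴴ) := by
  rw [← add_eq_zero_iff_eq_neg]
  constructor
  · intro h
    have := eq_zero_and_posSemidef_of_forall_posSemidef hA (isHermitian_mul_mul_conjTranspose B hM)
      fun Z => by simpa only [quadratic_add_sub_quadratic hM] using h (X₀ + Z)
    exact this.symm
  · rintro ⟨hN, hK⟩ X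
    have hdiff := quadratic_add_sub_quadratic (A := A) (B := B) (C := C) hM X₀ (X - X₀)
    rw [add_sub_cancel, hK] at hdiff
    rw [hdiff, conjTranspose_zero, Matrix.mul_zero, Matrix.zero_mul, add_zero, zero_add]
    exact hN.mul_mul_conjTranspose_same (A * (X - X₀))

theorem exists_mul_mul_eq_neg_iff_range_le (hM : M.IsHermitian) :
    (∃ X : Matrix p m ℂ, A * X * (B * M * Bᴴ) = -(C * M * Bᴴ)) ↔
      LinearMap.range (B * M * Cᴴ).mulVecLin ≤ LinearMap.range (B * M * Bᴴ).mulVecLin ∧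
        LinearMap.range (C * M * Bᴴ).mulVecLin ≤ LinearMap.range A.mulVecLin := by
  have hE : (C * M * Bᴴ)ᴴ = B * M * Cᴴ := by
    simp only [conjTranspose_mul, conjTranspose_conjTranspose, hM.eq, Matrix.mul_assoc]
  have hN : (B * M * Bᴴ)ᴴ = B * M * Bᴴ := isHermitian_mul_mul_conjTranspose B hM
  rw [exists_mul_mul_eq_iff, range_mulVecLin_le_iff, range_mulVecLin_le_iff, and_comm]
  refine and_congr ⟨fun ⟨V, hV⟩ => ⟨-Vᴴ, ?_⟩, fun ⟨Y, hY⟩ => ⟨-Yᴴ, ?_⟩⟩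
    ⟨fun ⟨Y, hY⟩ => ⟨-Y, ?_⟩, fun ⟨Y, hY⟩ => ⟨-Y, ?_⟩⟩
  · rw [← hE, ← neg_neg (C * M * Bᴴ), hV]
    simp [hN]
  · rw [← hE] at hY
    rw [← conjTranspose_conjTranspose (C * M * Bᴴ), hY]
    simp [hN]
  · rw [Matrix.mul_neg, ← hY, neg_neg]
  · rw [Matrix.mul_neg, ← hY]

end QuadraticMatrixFunction

theorem stmt17_general {k n : ℕ} {pdim mdim qdim : Fin k → ℕ}
    (A : ∀ i : Fin k, Matrix (Fin n) (Fin (pdim i)) ℂ)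
    (B : ∀ i : Fin k, Matrix (Fin (mdim i)) (Fin (qdim i)) ℂ)
    (C : ∀ i : Fin k, Matrix (Fin n) (Fin (qdim i)) ℂ)
    (M : ∀ i : Fin k, Matrix (Fin (qdim i)) (Fin (qdim i)) ℂ)
    (D : Matrix (Fin n) (Fin n) ℂ)
    (hM : ∀ i, (M i).IsHermitian)
    (hA : ∀ i, A i ≠ 0)
    (ψ : (∀ i : Fin k, Matrix (Fin (pdim i)) (Fin (mdim i)) ℂ) →
      Matrix (Fin n) (Fin n) ℂ)
    (hψ : ∀ X, ψ X =
      (∑ i, (A i * X i * B i + C i) * M i * (A i * X i * B i + C i)ᴴ) + D) :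
    ((∃ Xhat : ∀ i : Fin k, Matrix (Fin (pdim i)) (Fin (mdim i)) ℂ,
        ∀ X : ∀ i : Fin k, Matrix (Fin (pdim i)) (Fin (mdim i)) ℂ,
          (ψ X - ψ Xhat).PosSemidef) ↔
      ∀ i : Fin k,
        (B i * M i * (B i)ᴴ).PosSemidef ∧
        LinearMap.range (B i * M i * (C i)ᴴ).mulVecLin ≤
          LinearMap.range (B i * M i * (B i)ᴴ).mulVecLin ∧
        LinearMap.range (C i * M i * (B i)ᴴ).mulVecLin ≤
          LinearMap.range (A i).mulVecLin) ∧
    ((∀ i : Fin k,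
        (B i * M i * (B i)ᴴ).PosSemidef ∧
        LinearMap.range (B i * M i * (C i)ᴴ).mulVecLin ≤
          LinearMap.range (B i * M i * (B i)ᴴ).mulVecLin ∧
        LinearMap.range (C i * M i * (B i)ᴴ).mulVecLin ≤
          LinearMap.range (A i).mulVecLin) →
      ∀ Xhat : ∀ i : Fin k, Matrix (Fin (pdim i)) (Fin (mdim i)) ℂ,
        (∀ X : ∀ i : Fin k, Matrix (Fin (pdim i)) (Fin (mdim i)) ℂ,
            (ψ X - ψ Xhat).PosSemidef) ↔
          ∀ i : Fin k,
            A i * Xhat i * (B i * M i * (B i)ᴴ) = -(C i * M i * (B i)ᴴ)) := by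
  have hmin : ∀ Xhat : ∀ i : Fin k, Matrix (Fin (pdim i)) (Fin (mdim i)) ℂ,
      (∀ X, (ψ X - ψ Xhat).PosSemidef) ↔
        ∀ i, (B i * M i * (B i)ᴴ).PosSemidef ∧
          A i * Xhat i * (B i * M i * (B i)ᴴ) = -(C i * M i * (B i)ᴴ) := fun Xhat => by
    simp_rw [hψ, add_sub_add_right_eq_sub]
    rw [posSemidef_sum_sub_iff fun i (Y : Matrix (Fin (pdim i)) (Fin (mdim i)) ℂ) =>
      (A i * Y * B i + C i) * M i * (A i * Y * B i + C i)ᴴ]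
    exact forall_congr' fun i => quadratic_isMin_iff (hM i) (hA i) (Xhat i)
  refine ⟨?_, fun hcond Xhat => ?_⟩
  · calc _ ↔ ∃ Xhat : ∀ i : Fin k, Matrix (Fin (pdim i)) (Fin (mdim i)) ℂ, ∀ i,
            (B i * M i * (B i)ᴴ).PosSemidef ∧
              A i * Xhat i * (B i * M i * (B i)ᴴ) = -(C i * M i * (B i)ᴴ) := exists_congr hmin
      _ ↔ ∀ i, (B i * M i * (B i)ᴴ).PosSemidef ∧ ∃ X : Matrix (Fin (pdim i)) (Fin (mdim i)) ℂ,
            A i * X * (B i * M i * (B i)ᴴ) = -(C i * M i * (B i)ᴴ) :=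
        ⟨fun ⟨Xhat, h⟩ i => ⟨(h i).1, Xhat i, (h i).2⟩,
          fun h => ⟨fun i => (h i).2.choose, fun i => ⟨(h i).1, (h i).2.choose_spec⟩⟩⟩
      _ ↔ _ := forall_congr' fun i => and_congr_right' (exists_mul_mul_eq_neg_iff_range_le (hM i))
  · rw [hmin]
    exact forall_congr' fun i => and_iff_right (hcond i).1

theorem stmt17 {k n : ℕ} (hk : 1 ≤ k) {pdim mdim qdim : Fin k → ℕ}
    (A : ∀ i : Fin k, Matrix (Fin n) (Fin (pdim i)) ℂ)
    (B : ∀ i : Fin k, Matrix (Fin (mdim i)) (Fin (qdim i)) ℂ)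
    (C : ∀ i : Fin k, Matrix (Fin n) (Fin (qdim i)) ℂ)
    (M : ∀ i : Fin k, Matrix (Fin (qdim i)) (Fin (qdim i)) ℂ)
    (D : Matrix (Fin n) (Fin n) ℂ)
    (hD : D.IsHermitian) (hM : ∀ i, (M i).IsHermitian)
    (hA : ∀ i, A i ≠ 0)
    (ψ : (∀ i : Fin k, Matrix (Fin (pdim i)) (Fin (mdim i)) ℂ) →
      Matrix (Fin n) (Fin n) ℂ)
    (hψ : ∀ X, ψ X =
      (∑ i, (A i * X i * B i + C i) * M i * (A i * X i * B i + C i)ᴴ) + D) :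
    ((∃ Xhat : ∀ i : Fin k, Matrix (Fin (pdim i)) (Fin (mdim i)) ℂ,
        ∀ X : ∀ i : Fin k, Matrix (Fin (pdim i)) (Fin (mdim i)) ℂ,
          (ψ X - ψ Xhat).PosSemidef) ↔
      ∀ i : Fin k,
        (B i * M i * (B i)ᴴ).PosSemidef ∧
        LinearMap.range (B i * M i * (C i)ᴴ).mulVecLin ≤
          LinearMap.range (B i * M i * (B i)ᴴ).mulVecLin ∧
        LinearMap.range (C i * M i * (B i)ᴴ).mulVecLin ≤
          LinearMap.range (A i).mulVecLin) ∧
    ((∀ i : Fin k,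
        (B i * M i * (B i)ᴴ).PosSemidef ∧
        LinearMap.range (B i * M i * (C i)ᴴ).mulVecLin ≤
          LinearMap.range (B i * M i * (B i)ᴴ).mulVecLin ∧
        LinearMap.range (C i * M i * (B i)ᴴ).mulVecLin ≤
          LinearMap.range (A i).mulVecLin) →
      ∀ Xhat : ∀ i : Fin k, Matrix (Fin (pdim i)) (Fin (mdim i)) ℂ,
        (∀ X : ∀ i : Fin k, Matrix (Fin (pdim i)) (Fin (mdim i)) ℂ,
            (ψ X - ψ Xhat).PosSemidef) ↔
          ∀ i : Fin k,
            A i * Xhat i * (B i * M i * (B i)ᴴ) = -(C i * M i * (B i)ᴴ)) :=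
  stmt17_general A B C M D hM hA ψ hψ
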